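/- Let H₁ and H₂ be complex Hilbert spaces and let T be a positive bounded operator on the Hilbert space direct sum H₁ ⊕ H₂. Write T in block form: A := P₁ ∘ T ∘ ι₁ : H₁ → H₁, B := P₁ ∘ T ∘ ι₂ : H₂ → H₁, C := P₂ ∘ T ∘ ι₂ : H₂ → H₂, where ι_j are the isometric inclusions and P_j = ι_j† the coordinate projections. Assume A ≥ α for some real α > 0 (so A is boundedly invertible). Then C − B† ∘ A⁻¹ ∘ B is positive; consequently C ≥ ‖A‖⁻¹ · B† ∘ B, and if C is trace class then B is Hilbert–Schmidt. -/

import Mathlib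

noncomputable section

universe u v w

/-- A bounded linear operator between complex Hilbert spaces is **Hilbert–Schmidt** if for some
(equivalently, every) Hilbert orthonormal basis `(e i)` of its domain, the family
`i ↦ ‖T (e i)‖ ^ 2` is summable. -/
def IsHilbertSchmidt {E : Type u} {F : Type v} [NormedAddCommGroup E] [InnerProductSpace ℂ E]
    [NormedAddCommGroup F] [InnerProductSpace ℂ F] (T : E →L[ℂ] F) : Prop :=
  ∃ (ι : Type u) (b : HilbertBasis ι ℂ E), Summable fun i => ‖T (b i)‖ ^ 2

/-- The square root of a (positive) bounded operator on a complex Hilbert space, given by the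
continuous functional calculus applied to `Real.sqrt`; for a positive operator this is its
unique positive square root. -/
noncomputable def opSqrt {H : Type u} [NormedAddCommGroup H] [InnerProductSpace ℂ H]
    [CompleteSpace H] (A : H →L[ℂ] H) : H →L[ℂ] H :=
  cfc Real.sqrt A

/-- The absolute value `|T| := √(T† T)` of a bounded operator on a complex Hilbert space. -/
noncomputable def opAbs {H : Type u} [NormedAddCommGroup H] [InnerProductSpace ℂ H]
    [CompleteSpace H] (T : H →L[ℂ] H) : H →L[ℂ] H :=
  opSqrt (ContinuousLinearMap.adjoint T ∘L T)

/-- A bounded operator on a complex Hilbert space is **trace class** if for some (equivalently,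
every) Hilbert orthonormal basis `(e i)`, the family `i ↦ ⟪e i, |T| (e i)⟫` is summable. -/
def IsTraceClass {H : Type u} [NormedAddCommGroup H] [InnerProductSpace ℂ H] [CompleteSpace H]
    (T : H →L[ℂ] H) : Prop :=
  ∃ (ι : Type u) (b : HilbertBasis ι ℂ H), Summable fun i => (inner ℂ (b i) (opAbs T (b i)) : ℂ)

/-! The Schur complement is a compression of `T`: with `K := ι₂ - ι₁ A⁻¹ B` one has
`C - B† A⁻¹ B = K† T K ≥ 0`. For positive `A`, writing `A = S²` with `S = √A` gives
`‖A x‖² ≤ ‖A‖ re ⟪A x, x⟫`, hence `‖v‖² ≤ ‖A‖ re ⟪A⁻¹ v, v⟫`; combined with the Schur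
complement this yields `‖B y‖² ≤ ‖A‖ re ⟪C y, y⟫`. Both `C ≥ ‖A‖⁻¹ B† B` and, summing over a
Hilbert basis (where `|C| = C`), the Hilbert–Schmidt property of `B` follow from this
domination. -/

open ContinuousLinearMap
open scoped InnerProductSpace InnerProduct

namespace ContinuousLinearMap

variable {E F H : Type*}
  [NormedAddCommGroup E] [InnerProductSpace ℂ E] [CompleteSpace E]
  [NormedAddCommGroup F] [InnerProductSpace ℂ F] [CompleteSpace F]
  [NormedAddCommGroup H] [InnerProductSpace ℂ H] [CompleteSpace H]

theorem isUnit_of_forall_mul_norm_sq_le_re_inner {A : E →L[ℂ] E} {α : ℝ} (hα : 0 < α)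
    (h : ∀ x, α * ‖x‖ ^ 2 ≤ (⟪x, A x⟫_ℂ).re) : IsUnit A :=
  isUnit_of_forall_le_norm_inner_map A (c := ⟨α, hα.le⟩) hα fun x => calc
    ‖x‖ ^ 2 * α ≤ (⟪x, A x⟫_ℂ).re := by rw [mul_comm]; exact h x
    _ ≤ ‖⟪x, A x⟫_ℂ‖ := Complex.re_le_norm _
    _ = ‖⟪A x, x⟫_ℂ‖ := norm_inner_symm _ _

theorem IsPositive.norm_apply_sq_le {A : E →L[ℂ] E} (hA : A.IsPositive) (x : E) :
    ‖A x‖ ^ 2 ≤ ‖A‖ * (⟪A x, x⟫_ℂ).re := by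
  have hA₀ : 0 ≤ A := (nonneg_iff_isPositive A).2 hA
  set S := CFC.sqrt A
  have hS : IsSelfAdjoint S := .of_nonneg (CFC.sqrt_nonneg A)
  have hSS : S (S x) = A x := DFunLike.congr_fun (CFC.sqrt_mul_sqrt_self A) x
  have hnorm : ‖S‖ ^ 2 = ‖A‖ := by rw [CFC.norm_sqrt A, Real.sq_sqrt (norm_nonneg _)]
  calc ‖A x‖ ^ 2 = ‖S (S x)‖ ^ 2 := by rw [hSS]
    _ ≤ (‖S‖ * ‖S x‖) ^ 2 := by gcongr; exact S.le_opNorm _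
    _ = ‖A‖ * (⟪S x, S x⟫_ℂ).re := by
      rw [mul_pow, hnorm, ← inner_self_eq_norm_sq (𝕜 := ℂ), RCLike.re_to_complex]
    _ = ‖A‖ * (⟪A x, x⟫_ℂ).re := by rw [← hSS, ← adjoint_inner_left, hS.adjoint_eq]

theorem IsPositive.norm_sq_le_mul_re_inner_of_comp_eq_one {A A' : E →L[ℂ] E}
    (hA : A.IsPositive) (hAA' : A ∘L A' = 1) (v : E) :
    ‖v‖ ^ 2 ≤ ‖A‖ * (⟪A' v, v⟫_ℂ).re := by
  have hv : A (A' v) = v := DFunLike.congr_fun hAA' v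
  simpa only [hv, ← inner_conj_symm v, Complex.conj_re] using hA.norm_apply_sq_le (A' v)

theorem IsPositive.isPositive_schurComplement {T : H →L[ℂ] H} (hT : T.IsPositive)
    (i₁ : E →L[ℂ] H) (i₂ : F →L[ℂ] H) {A' : E →L[ℂ] E} (hA' : (i₁† ∘L T ∘L i₁) ∘L A' = 1) :
    (i₂† ∘L T ∘L i₂ - (i₁† ∘L T ∘L i₂)† ∘L A' ∘L (i₁† ∘L T ∘L i₂)).IsPositive := by
  set K := i₂ - i₁ ∘L A' ∘L (i₁† ∘L T ∘L i₂)
  have hA'v : ∀ v, (i₁†) (T (i₁ (A' v))) = v := fun v => DFunLike.congr_fun hA' v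
  have hK : i₂† ∘L T ∘L i₂ - (i₁† ∘L T ∘L i₂)† ∘L A' ∘L (i₁† ∘L T ∘L i₂) = K† ∘L T ∘L K := by
    ext y
    simp only [K, sub_apply, comp_apply, map_sub, adjoint_comp, adjoint_adjoint,
      hT.isSelfAdjoint.adjoint_eq, hA'v]
    abel
  rw [hK]
  exact hT.adjoint_conj K

theorem norm_apply_sq_le_of_isPositive_sub {A' : E →L[ℂ] E} {B : F →L[ℂ] E} {C : F →L[ℂ] F}
    {c : ℝ} (hc : 0 ≤ c) (hA' : ∀ v, ‖v‖ ^ 2 ≤ c * (⟪A' v, v⟫_ℂ).re)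
    (hS : (C - B† ∘L A' ∘L B).IsPositive) (y : F) :
    ‖B y‖ ^ 2 ≤ c * (⟪C y, y⟫_ℂ).re := by
  have hBA'B : (⟪(B† ∘L A' ∘L B) y, y⟫_ℂ).re ≤ (⟪C y, y⟫_ℂ).re := by
    simpa only [sub_apply, inner_sub_left, Complex.sub_re, sub_nonneg, RCLike.re_to_complex]
      using hS.re_inner_nonneg_left y
  calc ‖B y‖ ^ 2 ≤ c * (⟪A' (B y), B y⟫_ℂ).re := hA' (B y)
    _ = c * (⟪(B† ∘L A' ∘L B) y, y⟫_ℂ).re := by rw [comp_apply, comp_apply, adjoint_inner_left]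
    _ ≤ c * (⟪C y, y⟫_ℂ).re := by gcongr

theorem isPositive_sub_inv_smul_adjoint_comp_self {B : F →L[ℂ] E} {C : F →L[ℂ] F} {c : ℝ}
    (hC : C.IsPositive) (h : ∀ y, ‖B y‖ ^ 2 ≤ c * (⟪C y, y⟫_ℂ).re) :
    (C - c⁻¹ • (B† ∘L B)).IsPositive := by
  refine isPositive_def'.2 ⟨hC.isSelfAdjoint.sub
    (.smul (.all c⁻¹) (isPositive_adjoint_comp_self B).isSelfAdjoint), fun y => ?_⟩
  have hCy := hC.re_inner_nonneg_left y
  rw [reApplyInnerSelf_apply, sub_apply, inner_sub_left, map_sub, smul_apply,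
    RCLike.real_smul_eq_coe_smul (K := ℂ), inner_smul_real_left, RCLike.smul_re,
    ← apply_norm_sq_eq_inner_adjoint_left, sub_nonneg]
  rw [RCLike.re_to_complex] at hCy ⊢
  rcases le_or_gt c 0 with hc | hc
  · nlinarith [inv_nonpos.2 hc, sq_nonneg ‖B y‖]
  · rw [inv_mul_le_iff₀ hc]
    exact h y

end ContinuousLinearMap

theorem opAbs_eq_self {E : Type*} [NormedAddCommGroup E] [InnerProductSpace ℂ E]
    [CompleteSpace E] {C : E →L[ℂ] E} (hC : C.IsPositive) : opAbs C = C := by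
  have hC₀ : 0 ≤ C := (nonneg_iff_isPositive C).2 hC
  rw [opAbs, opSqrt, hC.isSelfAdjoint.adjoint_eq, ← mul_def, ← cfcₙ_eq_cfc,
    ← CFC.sqrt_eq_real_sqrt _ (hC.isSelfAdjoint.mul_self_nonneg), CFC.sqrt_mul_self C]

theorem IsTraceClass.isHilbertSchmidt_of_norm_apply_sq_le {E F : Type*}
    [NormedAddCommGroup E] [InnerProductSpace ℂ E]
    [NormedAddCommGroup F] [InnerProductSpace ℂ F] [CompleteSpace F]
    {B : F →L[ℂ] E} {C : F →L[ℂ] F} {c : ℝ} (hC : C.IsPositive) (htc : IsTraceClass C)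
    (h : ∀ y, ‖B y‖ ^ 2 ≤ c * (⟪C y, y⟫_ℂ).re) : IsHilbertSchmidt B := by
  obtain ⟨ι, b, hsum⟩ := htc
  rw [opAbs_eq_self hC] at hsum
  refine ⟨ι, b, .of_nonneg_of_le (fun i => sq_nonneg _) (fun i => ?_)
    ((Complex.hasSum_re hsum.hasSum).summable.mul_left c)⟩
  rw [← inner_conj_symm, Complex.conj_re]
  exact h (b i)

theorem block_positivity_schur_general
    {H₁ : Type u} {H₂ : Type v} {H : Type w}
    [NormedAddCommGroup H₁] [InnerProductSpace ℂ H₁] [CompleteSpace H₁]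
    [NormedAddCommGroup H₂] [InnerProductSpace ℂ H₂] [CompleteSpace H₂]
    [NormedAddCommGroup H] [InnerProductSpace ℂ H] [CompleteSpace H]
    (i1 : H₁ →L[ℂ] H) (i2 : H₂ →L[ℂ] H)
    (T : H →L[ℂ] H) (hT : T.IsPositive)
    (A : H₁ →L[ℂ] H₁) (B : H₂ →L[ℂ] H₁) (C : H₂ →L[ℂ] H₂)
    (hA : A = ContinuousLinearMap.adjoint i1 ∘L T ∘L i1)
    (hB : B = ContinuousLinearMap.adjoint i1 ∘L T ∘L i2)
    (hC : C = ContinuousLinearMap.adjoint i2 ∘L T ∘L i2)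
    (α : ℝ) (hα : 0 < α)
    (hAα : ∀ x : H₁, α * ‖x‖ ^ 2 ≤ (inner ℂ x (A x) : ℂ).re) :
    (∃ A' : H₁ →L[ℂ] H₁, A ∘L A' = 1 ∧ A' ∘L A = 1 ∧
        (C - ContinuousLinearMap.adjoint B ∘L A' ∘L B).IsPositive) ∧
      (C - ‖A‖⁻¹ • (ContinuousLinearMap.adjoint B ∘L B)).IsPositive ∧
      (IsTraceClass C → IsHilbertSchmidt B) := by
  subst hA hB hC
  have hA_unit := isUnit_of_forall_mul_norm_sq_le_re_inner hα hAα
  have hAA' : _ ∘L _ = 1 := hA_unit.mul_val_inv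
  have hschur := hT.isPositive_schurComplement i1 i2 hAA'
  have hdom := norm_apply_sq_le_of_isPositive_sub (norm_nonneg _)
    ((hT.adjoint_conj i1).norm_sq_le_mul_re_inner_of_comp_eq_one hAA') hschur
  have hC_pos := hT.adjoint_conj i2
  exact ⟨⟨_, hAA', hA_unit.val_inv_mul, hschur⟩,
    isPositive_sub_inv_smul_adjoint_comp_self hC_pos hdom,
    fun htc => htc.isHilbertSchmidt_of_norm_apply_sq_le hC_pos hdom⟩

/-- Block bounds for a positive operator on a direct sum `H₁ ⊕ H₂` (realized inside `H` by
isometric inclusions `i1`, `i2` with orthogonal ranges spanning `H`). If the block `A` obeys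
`A ≥ α > 0`, then the Schur complement `C - B† A⁻¹ B` is positive; consequently
`C ≥ ‖A‖⁻¹ B† B`, and if `C` is trace class then `B` is Hilbert–Schmidt. -/
theorem block_positivity_schur
    {H₁ : Type u} {H₂ : Type v} {H : Type w}
    [NormedAddCommGroup H₁] [InnerProductSpace ℂ H₁] [CompleteSpace H₁]
    [NormedAddCommGroup H₂] [InnerProductSpace ℂ H₂] [CompleteSpace H₂]
    [NormedAddCommGroup H] [InnerProductSpace ℂ H] [CompleteSpace H]
    (i1 : H₁ →L[ℂ] H) (i2 : H₂ →L[ℂ] H)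
    (hi1 : ContinuousLinearMap.adjoint i1 ∘L i1 = 1)
    (hi2 : ContinuousLinearMap.adjoint i2 ∘L i2 = 1)
    (horth : ContinuousLinearMap.adjoint i1 ∘L i2 = 0)
    (hspan : i1 ∘L ContinuousLinearMap.adjoint i1 + i2 ∘L ContinuousLinearMap.adjoint i2 = 1)
    (T : H →L[ℂ] H) (hT : T.IsPositive)
    (A : H₁ →L[ℂ] H₁) (B : H₂ →L[ℂ] H₁) (C : H₂ →L[ℂ] H₂)
    (hA : A = ContinuousLinearMap.adjoint i1 ∘L T ∘L i1)
    (hB : B = ContinuousLinearMap.adjoint i1 ∘L T ∘L i2)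
    (hC : C = ContinuousLinearMap.adjoint i2 ∘L T ∘L i2)
    (α : ℝ) (hα : 0 < α)
    (hAα : ∀ x : H₁, α * ‖x‖ ^ 2 ≤ (inner ℂ x (A x) : ℂ).re) :
    (∃ A' : H₁ →L[ℂ] H₁, A ∘L A' = 1 ∧ A' ∘L A = 1 ∧
        (C - ContinuousLinearMap.adjoint B ∘L A' ∘L B).IsPositive) ∧
      (C - ‖A‖⁻¹ • (ContinuousLinearMap.adjoint B ∘L B)).IsPositive ∧
      (IsTraceClass C → IsHilbertSchmidt B) :=
  block_positivity_schur_general i1 i2 T hT A B C hA hB hC α hα hAα
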